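/- Let f : ℝ^(m×n) → ℝ be convex differentiable, k ≥ 2, L_k(M₁,…,M_k) = f(M_k⋯M₁) with d_k = m, d₀ = n, and d = min_i d_i attained at an interior index j (0 < j < k). If (M₁,…,M_k) is a local minimum of L_k and f'(M_k⋯M₁) ≠ 0, then both A = M_k⋯M_{j+1} and B = M_j⋯M₁ have rank exactly d. -/

import Mathlib

attribute [local instance] Matrix.frobeniusNormedAddCommGroup Matrix.frobeniusNormedSpace

/-- Product `M (b-1) * ⋯ * M a` of a chain of matrices (identity when `b = a`,
junk value `0` when `b < a`). -/
def chainProd (d : ℕ → ℕ) (M : ∀ i : ℕ, Matrix (Fin (d (i + 1))) (Fin (d i)) ℝ)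
    (a : ℕ) : (b : ℕ) → Matrix (Fin (d b)) (Fin (d a)) ℝ
  | 0 => if h : 0 = a then by rw [← h]; exact 1 else 0
  | (b + 1) => if h : b + 1 = a then by rw [← h]; exact 1
      else M b * chainProd d M a b

/-- Extend a `Fin k`-indexed tuple of layer matrices to an `ℕ`-indexed one (by `0`). -/
def ext (d : ℕ → ℕ) (k : ℕ)
    (N : ∀ i : Fin k, Matrix (Fin (d (i.1 + 1))) (Fin (d i.1)) ℝ) :
    ∀ i : ℕ, Matrix (Fin (d (i + 1))) (Fin (d i)) ℝ :=
  fun i => if h : i < k then N ⟨i, h⟩ else 0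

/-!
Write `P a b = N (b-1) ⋯ N a` for the partial products of a configuration `N`, `W = P 0 k` and
`G = f' W`. Changing one layer `N i ↦ N i + t • Δ` with `P (i+1) k * Δ * P 0 i = 0` leaves the
product unchanged, so for small `t` it stays in the neighbourhood where `N` minimises the loss and
is again a local minimum with product `W`, where the critical-point equations
`(P (i+1) k)ᵀ * G * (P 0 i)ᵀ = 0` hold once more. Differentiating such identities in `t` along
rank-one directions `Δ = u vᵀ`, with `v` in the kernel or left kernel of a rank-deficient partial
product, spreads the vanishing of `(P b k)ᵀ * G * (P 0 a)ᵀ` from single layers `b = a + 1` to the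
whole chain `a = 0, b = k`, i.e. forces `G = 0`. This works as soon as some top block `P β k` has
rank below `d = min dᵢ` while `P (β+1) k` does not; so by descending induction on `β`,
`rank W ≥ d`, and then `A` and `B` have rank at least `rank (A * B) = rank W`.
-/

open Matrix Filter Topology

section LinearAlgebra

variable {m n o K : Type*} [Field K]

theorem Matrix.rank_eq_card_of_mulVec_injective [Fintype n] {A : Matrix m n K}
    (hA : Function.Injective A.mulVec) : A.rank = Fintype.card n := by
  rw [rank, LinearMap.finrank_range_of_inj hA, Module.finrank_fintype_fun_eq_card]

theorem Matrix.exists_mulVec_eq_zero_of_not_injective [Fintype n] {A : Matrix m n K}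
    (hA : ¬ Function.Injective A.mulVec) : ∃ v ≠ 0, A *ᵥ v = 0 := by
  by_contra! h
  exact hA <| (injective_iff_map_eq_zero A.mulVecLin).mpr fun v hv => by
    by_contra h0
    exact h v h0 hv

theorem Matrix.exists_mulVec_eq_zero_of_rank_lt [Fintype n] {A : Matrix m n K}
    (hA : A.rank < Fintype.card n) : ∃ v ≠ 0, A *ᵥ v = 0 :=
  exists_mulVec_eq_zero_of_not_injective fun hinj => hA.ne (rank_eq_card_of_mulVec_injective hinj)

theorem Matrix.exists_vecMul_eq_zero_of_not_injective [Fintype m] {A : Matrix m n K}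
    (hA : ¬ Function.Injective A.vecMul) : ∃ v ≠ 0, v ᵥ* A = 0 := by
  simp_rw [← mulVec_transpose] at hA ⊢
  exact exists_mulVec_eq_zero_of_not_injective hA

theorem Matrix.rank_mul_eq_left_of_vecMul_injective [Fintype m] [Fintype n] [Fintype o]
    (A : Matrix o m K) {B : Matrix m n K} (hB : Function.Injective B.vecMul) :
    (A * B).rank = A.rank := by
  have hBt : Function.Injective Bᵀ.mulVecLin := fun x y hxy =>
    hB (by simpa only [mulVecLin_apply, mulVec_transpose] using hxy)
  rw [← rank_transpose, transpose_mul, ← rank_transpose A, rank, rank, mulVecLin_mul,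
    LinearMap.range_comp, ← (Submodule.equivMapOfInjective _ hBt _).finrank_eq]

theorem Matrix.vecMulVec_eq_zero_iff {a : m → K} {b : n → K} :
    vecMulVec a b = 0 ↔ a = 0 ∨ b = 0 := by
  simp only [← ext_iff, vecMulVec_apply, zero_apply, mul_eq_zero, funext_iff, Pi.zero_apply,
    forall_or_left, forall_or_right]

theorem Matrix.eq_zero_of_forall_mul_vecMulVec_eq_zero [Fintype n] {Y : Matrix m n K}
    {w : o → K} (hw : w ≠ 0) (h : ∀ z : n → K, Y * vecMulVec z w = 0) : Y = 0 := by
  refine ext_iff_mulVec.mpr fun z => ?_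
  have hz := h z
  rw [mul_vecMulVec, vecMulVec_eq_zero_iff] at hz
  simpa using hz.resolve_right hw

theorem Matrix.eq_zero_of_forall_vecMulVec_mul_eq_zero [Fintype m] {Y : Matrix m n K}
    {w : o → K} (hw : w ≠ 0) (h : ∀ u : m → K, vecMulVec w u * Y = 0) : Y = 0 := by
  refine ext_iff_vecMul.mpr fun u => ?_
  have hu := h u
  rw [vecMulVec_mul, vecMulVec_eq_zero_iff] at hu
  simpa using hu.resolve_left hw

end LinearAlgebra

theorem eq_zero_of_eventually_add_smul_eq_zero {E : Type*} [AddCommGroup E] [Module ℝ E]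
    {X Y : E} (h : ∀ᶠ t in 𝓝 (0 : ℝ), X + t • Y = 0) : Y = 0 := by
  have hX : X = 0 := by simpa using h.self_of_nhds
  obtain ⟨t, ht, ht0⟩ := ((h.filter_mono nhdsWithin_le_nhds).and
    (self_mem_nhdsWithin : {0}ᶜ ∈ 𝓝[≠] (0 : ℝ))).exists
  exact (smul_eq_zero.mp (by simpa [hX] using ht)).resolve_left ht0

theorem IsLocalMin.eventually_isLocalMin_of_eq {X β : Type*} [TopologicalSpace X] [Preorder β]
    {φ : X → β} {x : X} (h : IsLocalMin φ x) : ∀ᶠ y in 𝓝 x, φ y = φ x → IsLocalMin φ y :=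
  (eventually_eventually_nhds.mpr h).mono fun _ hy hyx => hy.mono fun _ hz => hyx ▸ hz

section ChainProd

variable {d : ℕ → ℕ} (M : ∀ i : ℕ, Matrix (Fin (d (i + 1))) (Fin (d i)) ℝ)

@[simp]
theorem chainProd_self (a : ℕ) : chainProd d M a a = 1 := by
  cases a <;> simp [chainProd]

theorem chainProd_succ {a b : ℕ} (h : b + 1 ≠ a) :
    chainProd d M a (b + 1) = M b * chainProd d M a b := by
  simp [chainProd, h]

theorem chainProd_of_lt {a b : ℕ} (h : b < a) : chainProd d M a b = 0 := by
  induction b with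
  | zero => simp [chainProd, h.ne]
  | succ b ih => rw [chainProd_succ M h.ne, ih (by omega), Matrix.mul_zero]

theorem chainProd_trans {a b c : ℕ} (hab : a ≤ b) (hbc : b ≤ c) :
    chainProd d M a c = chainProd d M b c * chainProd d M a b := by
  induction c, hbc using Nat.le_induction with
  | base => rw [chainProd_self, Matrix.one_mul]
  | succ c hbc ih =>
    rw [chainProd_succ M (by omega), chainProd_succ M (by omega), ih, Matrix.mul_assoc]

theorem chainProd_eq_mul_mul {a i b : ℕ} (hai : a ≤ i) (hib : i < b) :
    chainProd d M a b = chainProd d M (i + 1) b * M i * chainProd d M a i := by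
  rw [chainProd_trans M (show a ≤ i + 1 by omega) hib, chainProd_succ M (by omega),
    Matrix.mul_assoc]

theorem chainProd_congr {M' : ∀ i : ℕ, Matrix (Fin (d (i + 1))) (Fin (d i)) ℝ} {a b : ℕ}
    (h : ∀ i, a ≤ i → i < b → M i = M' i) : chainProd d M a b = chainProd d M' a b := by
  induction b with
  | zero => rfl
  | succ b ih =>
    rcases lt_trichotomy (b + 1) a with hlt | heq | hgt
    · rw [chainProd_of_lt M hlt, chainProd_of_lt M' hlt]
    · subst heq; rw [chainProd_self, chainProd_self]
    · rw [chainProd_succ M hgt.ne', chainProd_succ M' hgt.ne', h b (by omega) (by omega),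
        ih fun i hai hib => h i hai (by omega)]

end ChainProd

namespace LinearNetwork

variable {d : ℕ → ℕ} {k : ℕ}

abbrev Config (d : ℕ → ℕ) (k : ℕ) : Type :=
  ∀ i : Fin k, Matrix (Fin (d (i.1 + 1))) (Fin (d i.1)) ℝ

def partialProd (N : Config d k) (a b : ℕ) : Matrix (Fin (d b)) (Fin (d a)) ℝ :=
  chainProd d (_root_.ext d k N) a b

def perturb (N : Config d k) (i : Fin k) (Δ : Matrix (Fin (d (i.1 + 1))) (Fin (d i.1)) ℝ) :
    Config d k :=
  Function.update N i (N i + Δ)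

section Perturb

variable (N : Config d k)

@[simp]
theorem partialProd_self (a : ℕ) : partialProd N a a = 1 :=
  chainProd_self _ a

theorem partialProd_trans {a b c : ℕ} (hab : a ≤ b) (hbc : b ≤ c) :
    partialProd N a c = partialProd N b c * partialProd N a b :=
  chainProd_trans _ hab hbc

theorem partialProd_eq_mul_mul (i : Fin k) {a b : ℕ} (ha : a ≤ i) (hb : i < b) :
    partialProd N a b = partialProd N (i + 1) b * N i * partialProd N a i := by
  rw [partialProd, chainProd_eq_mul_mul _ ha hb, _root_.ext, dif_pos i.isLt]
  rfl

variable (i : Fin k) (Δ : Matrix (Fin (d (i.1 + 1))) (Fin (d i.1)) ℝ)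

theorem partialProd_perturb_of_lt_or_le {a b : ℕ} (h : i.1 < a ∨ b ≤ i.1) :
    partialProd (perturb N i Δ) a b = partialProd N a b := by
  refine chainProd_congr _ fun m ham hmb => ?_
  have hmi : m ≠ i.1 := by omega
  unfold _root_.ext perturb
  split_ifs with hm
  · exact Function.update_of_ne (fun h => hmi (congrArg Fin.val h)) _ _
  · rfl

theorem partialProd_perturb {a b : ℕ} (ha : a ≤ i) (hb : i < b) :
    partialProd (perturb N i Δ) a b
      = partialProd N a b + partialProd N (i + 1) b * Δ * partialProd N a i := by
  rw [partialProd_eq_mul_mul _ i ha hb, partialProd_eq_mul_mul N i ha hb,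
    partialProd_perturb_of_lt_or_le N i Δ (Or.inl i.1.lt_succ_self),
    partialProd_perturb_of_lt_or_le N i Δ (Or.inr le_rfl), perturb, Function.update_self,
    Matrix.mul_add, Matrix.add_mul]

theorem partialProd_perturb_smul {a b : ℕ} (ha : a ≤ i) (hb : i < b) (t : ℝ) :
    partialProd (perturb N i (t • Δ)) a b
      = partialProd N a b + t • (partialProd N (i + 1) b * Δ * partialProd N a i) := by
  rw [partialProd_perturb N i _ ha hb, Matrix.mul_smul, Matrix.smul_mul]

theorem partialProd_perturb_smul_of_mul_eq_zero {a b : ℕ} (ha : a ≤ i) (hb : i < b)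
    (hΔ : partialProd N (i + 1) b * Δ * partialProd N a i = 0) (t : ℝ) :
    partialProd (perturb N i (t • Δ)) a b = partialProd N a b := by
  rw [partialProd_perturb_smul N i Δ ha hb, hΔ, smul_zero, add_zero]

theorem tendsto_perturb_smul :
    Tendsto (fun t : ℝ => perturb N i (t • Δ)) (𝓝 0) (𝓝 N) := by
  have hc : Continuous fun t : ℝ => perturb N i (t • Δ) :=
    continuous_const.update i (continuous_const.add (continuous_id.smul continuous_const))
  simpa [perturb] using hc.tendsto 0

end Perturb

variable {f : Matrix (Fin (d k)) (Fin (d 0)) ℝ → ℝ}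

def localMinFiber (f : Matrix (Fin (d k)) (Fin (d 0)) ℝ → ℝ)
    (W : Matrix (Fin (d k)) (Fin (d 0)) ℝ) : Set (Config d k) :=
  {N | IsLocalMin (fun N' => f (partialProd N' 0 k)) N ∧ partialProd N 0 k = W}

theorem eventually_perturb_mem_localMinFiber {W : Matrix (Fin (d k)) (Fin (d 0)) ℝ} {N : Config d k}
    (hN : N ∈ localMinFiber f W) (i : Fin k) {Δ : Matrix (Fin (d (i.1 + 1))) (Fin (d i.1)) ℝ}
    (hΔ : partialProd N (i + 1) k * Δ * partialProd N 0 i = 0) :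
    ∀ᶠ t in 𝓝 (0 : ℝ), perturb N i (t • Δ) ∈ localMinFiber f W := by
  have hprod := partialProd_perturb_smul_of_mul_eq_zero N i Δ (Nat.zero_le _) i.isLt hΔ
  filter_upwards [(tendsto_perturb_smul N i Δ).eventually hN.1.eventually_isLocalMin_of_eq]
    with t ht
  exact ⟨ht (by simp only [hprod]), (hprod t).trans hN.2⟩

/-- The gradient of `X ↦ ⟪G, P b k * X * P 0 a⟫`: for `G = f' W` the derivative of the loss with
respect to the block `N (b-1) ⋯ N a`. -/
def blockGrad (G : Matrix (Fin (d k)) (Fin (d 0)) ℝ) (N : Config d k) (a b : ℕ) :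
    Matrix (Fin (d b)) (Fin (d a)) ℝ :=
  (partialProd N b k)ᵀ * G * (partialProd N 0 a)ᵀ

@[simp]
theorem blockGrad_zero_self (G : Matrix (Fin (d k)) (Fin (d 0)) ℝ) (N : Config d k) :
    blockGrad G N 0 k = G := by
  simp [blockGrad]

theorem trace_mul_blockGrad (G : Matrix (Fin (d k)) (Fin (d 0)) ℝ) (N : Config d k) {a b : ℕ}
    (X : Matrix (Fin (d a)) (Fin (d b)) ℝ) :
    (X * blockGrad G N a b).trace
      = (Gᵀ * (partialProd N b k * Xᵀ * partialProd N 0 a)).trace := by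
  rw [← trace_transpose, blockGrad]
  simp only [transpose_mul, transpose_transpose, Matrix.mul_assoc]
  rw [trace_mul_comm]
  simp only [Matrix.mul_assoc]

theorem blockGrad_layer_eq_zero (hdiff : Differentiable ℝ f)
    {f' : Matrix (Fin (d k)) (Fin (d 0)) ℝ → Matrix (Fin (d k)) (Fin (d 0)) ℝ}
    (hf' : ∀ M H, fderiv ℝ f M H = ((f' M)ᵀ * H).trace) {N : Config d k}
    (hN : IsLocalMin (fun N' => f (partialProd N' 0 k)) N) (i : Fin k) :
    blockGrad (f' (partialProd N 0 k)) N i (i + 1) = 0 := by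
  set W := partialProd N 0 k
  refine ext_iff_trace_mul_left.mpr fun X => ?_
  set K := partialProd N (i + 1) k * Xᵀ * partialProd N 0 i
  have hline : IsLocalMin (fun t : ℝ => f (W + t • K)) 0 := by
    filter_upwards [(tendsto_perturb_smul N i Xᵀ).eventually hN] with t ht
    simpa [partialProd_perturb_smul N i Xᵀ (Nat.zero_le _) i.isLt] using ht
  have hderiv : HasDerivAt (fun t : ℝ => f (W + t • K)) (fderiv ℝ f W K) 0 := by
    have hK := ((hasDerivAt_id (0 : ℝ)).smul_const K).const_add W
    rw [one_smul] at hK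
    have h := (hdiff (W + (0 : ℝ) • K)).hasFDerivAt.comp_hasDerivAt 0 hK
    rwa [zero_smul, add_zero] at h
  rw [trace_mul_blockGrad, Matrix.mul_zero, trace_zero, ← hf']
  exact hline.hasDerivAt_eq_zero hderiv

section Propagation

variable {G : Matrix (Fin (d k)) (Fin (d 0)) ℝ} {S : Set (Config d k)} {N : Config d k}

theorem blockGrad_eq_zero_of_succ_left {a b : ℕ} (ha : a < k) (hab : a < b)
    (hS : ∀ N ∈ S, blockGrad G N (a + 1) b = 0) {w : Fin (d (a + 1)) → ℝ} (hw : w ≠ 0)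
    (hstab : ∀ z, ∀ᶠ t in 𝓝 (0 : ℝ), perturb N ⟨a, ha⟩ (t • vecMulVec w z) ∈ S) :
    blockGrad G N a b = 0 := by
  refine eq_zero_of_forall_mul_vecMulVec_eq_zero hw fun z =>
    eq_zero_of_eventually_add_smul_eq_zero (X := blockGrad G N (a + 1) b) ?_
  filter_upwards [hstab z] with t ht
  rw [← hS _ ht]
  simp only [blockGrad]
  rw [partialProd_perturb_of_lt_or_le N ⟨a, ha⟩ _ (Or.inl hab),
    partialProd_perturb_smul N ⟨a, ha⟩ _ (Nat.zero_le a) a.lt_succ_self]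
  simp [transpose_vecMulVec, Matrix.mul_add, Matrix.mul_assoc]

theorem blockGrad_eq_zero_of_succ_right {a b : ℕ} (hb : b < k) (hab : a ≤ b)
    (hS : ∀ N ∈ S, blockGrad G N a b = 0) {w : Fin (d b) → ℝ} (hw : w ≠ 0)
    (hstab : ∀ u, ∀ᶠ t in 𝓝 (0 : ℝ), perturb N ⟨b, hb⟩ (t • vecMulVec u w) ∈ S) :
    blockGrad G N a (b + 1) = 0 := by
  refine eq_zero_of_forall_vecMulVec_mul_eq_zero hw fun u =>
    eq_zero_of_eventually_add_smul_eq_zero (X := blockGrad G N a b) ?_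
  filter_upwards [hstab u] with t ht
  rw [← hS _ ht]
  simp only [blockGrad]
  rw [partialProd_perturb_of_lt_or_le N ⟨b, hb⟩ _ (Or.inr hab),
    partialProd_perturb_smul N ⟨b, hb⟩ _ le_rfl hb]
  simp [transpose_vecMulVec, Matrix.add_mul, Matrix.mul_assoc]

end Propagation

def lowRankFiber (f : Matrix (Fin (d k)) (Fin (d 0)) ℝ → ℝ) (W : Matrix (Fin (d k)) (Fin (d 0)) ℝ)
    (β r : ℕ) : Set (Config d k) :=
  {N | N ∈ localMinFiber f W ∧ (partialProd N β k).rank < r}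

theorem eventually_perturb_mem_lowRankFiber {W : Matrix (Fin (d k)) (Fin (d 0)) ℝ} {β r : ℕ}
    {N : Config d k} (hN : N ∈ lowRankFiber f W β r) (i : Fin k)
    {Δ : Matrix (Fin (d (i.1 + 1))) (Fin (d i.1)) ℝ}
    (hΔ : partialProd N (i + 1) k * Δ * partialProd N 0 i = 0)
    (hβ : ∀ t : ℝ, partialProd (perturb N i (t • Δ)) β k = partialProd N β k) :
    ∀ᶠ t in 𝓝 (0 : ℝ), perturb N i (t • Δ) ∈ lowRankFiber f W β r :=
  (eventually_perturb_mem_localMinFiber hN.1 i hΔ).mono fun t ht => ⟨ht, (hβ t).symm ▸ hN.2⟩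

section LowRank

variable (hdiff : Differentiable ℝ f)
  {f' : Matrix (Fin (d k)) (Fin (d 0)) ℝ → Matrix (Fin (d k)) (Fin (d 0)) ℝ}
  (hf' : ∀ M H, fderiv ℝ f M H = ((f' M)ᵀ * H).trace)
  {W : Matrix (Fin (d k)) (Fin (d 0)) ℝ} {r : ℕ} (hr : ∀ i ≤ k, r ≤ d i)
include hdiff hf' hr

theorem blockGrad_succ_eq_zero_of_mem_lowRankFiber {β : ℕ} (hβ : β < k) {a : ℕ} (ha : a ≤ β) :
    ∀ N ∈ lowRankFiber f W β r, blockGrad (f' W) N a (β + 1) = 0 := by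
  induction ha using Nat.decreasingInduction with
  | self =>
    rintro N ⟨⟨hmin, rfl⟩, -⟩
    exact blockGrad_layer_eq_zero hdiff hf' hmin ⟨β, hβ⟩
  | of_succ a ha ih =>
    intro N hN
    have hrank : (partialProd N (a + 1) k).rank < Fintype.card (Fin (d (a + 1))) := calc
      _ ≤ (partialProd N β k).rank := by
        rw [partialProd_trans N (show a + 1 ≤ β by omega) hβ.le]
        exact rank_mul_le_left _ _
      _ < r := hN.2
      _ ≤ d (a + 1) := hr _ (by omega)
      _ = _ := (Fintype.card_fin _).symm
    obtain ⟨w, hw, hPw⟩ := exists_mulVec_eq_zero_of_rank_lt hrank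
    refine blockGrad_eq_zero_of_succ_left (by omega) (by omega) ih hw fun z =>
      eventually_perturb_mem_lowRankFiber hN ⟨a, by omega⟩ ?_
        fun _ => partialProd_perturb_of_lt_or_le N ⟨a, by omega⟩ _ (Or.inl ha)
    rw [mul_vecMulVec, hPw]
    simp

theorem blockGrad_zero_eq_zero_of_mem_lowRankFiber {β : ℕ} (hβ : β < k)
    (hsucc : ∀ N ∈ localMinFiber f W, r ≤ (partialProd N (β + 1) k).rank) {b : ℕ} (hβb : β < b)
    (hb : b ≤ k) : ∀ N ∈ lowRankFiber f W β r, blockGrad (f' W) N 0 b = 0 := by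
  induction b, hβb using Nat.le_induction with
  | base => exact blockGrad_succ_eq_zero_of_mem_lowRankFiber hdiff hf' hr hβ (Nat.zero_le β)
  | succ b hβb ih =>
    intro N hN
    have hinj : ¬ Function.Injective (partialProd N β b).vecMul := fun hinj => by
      have hβk := hN.2
      rw [partialProd_trans N (by omega : β ≤ b) (by omega : b ≤ k),
        rank_mul_eq_left_of_vecMul_injective _ hinj] at hβk
      have hsk := hsucc N hN.1
      rw [partialProd_trans N hβb (by omega : b ≤ k)] at hsk
      exact (hsk.trans (rank_mul_le_left _ _)).not_gt hβk
    obtain ⟨w, hw, hwP⟩ := exists_vecMul_eq_zero_of_not_injective hinj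
    have hΔ (u : Fin (d (b + 1)) → ℝ) : vecMulVec u w * partialProd N β b = 0 := by
      rw [vecMulVec_mul, hwP, vecMulVec_eq_zero_iff]
      exact Or.inr rfl
    refine blockGrad_eq_zero_of_succ_right (by omega) (Nat.zero_le b) (ih (by omega)) hw
      fun u => eventually_perturb_mem_lowRankFiber hN ⟨b, by omega⟩ ?_
        (partialProd_perturb_smul_of_mul_eq_zero N ⟨b, by omega⟩ _ (by omega : β ≤ b)
          (by omega) ?_)
    · rw [partialProd_trans N (Nat.zero_le β) (by omega : β ≤ b), ← Matrix.mul_assoc,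
        Matrix.mul_assoc _ _ (partialProd N β b), hΔ, Matrix.mul_zero, Matrix.zero_mul]
    · rw [Matrix.mul_assoc, hΔ, Matrix.mul_zero]

theorem le_rank_partialProd_of_succ (hG : f' W ≠ 0) {β : ℕ} (hβ : β < k)
    (hsucc : ∀ N ∈ localMinFiber f W, r ≤ (partialProd N (β + 1) k).rank) :
    ∀ N ∈ localMinFiber f W, r ≤ (partialProd N β k).rank := by
  intro N hN
  by_contra! hlt
  exact hG (by simpa using
    blockGrad_zero_eq_zero_of_mem_lowRankFiber hdiff hf' hr hβ hsucc hβ le_rfl N ⟨hN, hlt⟩)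

theorem le_rank_partialProd (hG : f' W ≠ 0) {β : ℕ} (hβ : β ≤ k) :
    ∀ N ∈ localMinFiber f W, r ≤ (partialProd N β k).rank := by
  induction hβ using Nat.decreasingInduction with
  | self => simpa using fun _ _ => hr k le_rfl
  | of_succ β hβ ih => exact le_rank_partialProd_of_succ hdiff hf' hr hG hβ ih

end LowRank

end LinearNetwork

open LinearNetwork

open Matrix in
theorem stmt_10_general (d : ℕ → ℕ) (k : ℕ)
    (f : Matrix (Fin (d k)) (Fin (d 0)) ℝ → ℝ)
    (hdiff : Differentiable ℝ f)
    (f' : Matrix (Fin (d k)) (Fin (d 0)) ℝ → Matrix (Fin (d k)) (Fin (d 0)) ℝ)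
    (hf' : ∀ M H, fderiv ℝ f M H = ((f' M)ᵀ * H).trace)
    (j : ℕ) (hjk : j < k) (hmin : ∀ i ≤ k, d j ≤ d i)
    (M : ∀ i : Fin k, Matrix (Fin (d (i.1 + 1))) (Fin (d i.1)) ℝ)
    (hloc : IsLocalMin (fun N => f (chainProd d (ext d k N) 0 k)) M)
    (hgrad : f' (chainProd d (ext d k M) 0 k) ≠ 0) :
    (chainProd d (ext d k M) j k).rank = d j ∧
      (chainProd d (ext d k M) 0 j).rank = d j := by
  have hW : d j ≤ (partialProd M j k * partialProd M 0 j).rank := by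
    rw [← partialProd_trans M (Nat.zero_le j) hjk.le]
    exact le_rank_partialProd hdiff hf' hmin hgrad (Nat.zero_le k) M ⟨hloc, rfl⟩
  refine ⟨le_antisymm ?_ (hW.trans (rank_mul_le_left _ _)),
    le_antisymm ?_ (hW.trans (rank_mul_le_right _ _))⟩
  · exact (rank_le_card_width _).trans_eq (Fintype.card_fin _)
  · exact (rank_le_card_height _).trans_eq (Fintype.card_fin _)

open Matrix in
/-- at a local minimum of `L_k` with an interior bottleneck of width
`d j`, if `f'(M_k ⋯ M_1) ≠ 0` then both `A = M_k ⋯ M_{j+1}` and `B = M_j ⋯ M_1`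
have full rank `d j`. -/
theorem stmt_10 (d : ℕ → ℕ) (k : ℕ) (hk : 2 ≤ k)
    (f : Matrix (Fin (d k)) (Fin (d 0)) ℝ → ℝ)
    (hconv : ConvexOn ℝ Set.univ f) (hdiff : Differentiable ℝ f)
    (f' : Matrix (Fin (d k)) (Fin (d 0)) ℝ → Matrix (Fin (d k)) (Fin (d 0)) ℝ)
    (hf' : ∀ M H, fderiv ℝ f M H = ((f' M)ᵀ * H).trace)
    (j : ℕ) (hj0 : 0 < j) (hjk : j < k) (hmin : ∀ i ≤ k, d j ≤ d i)
    (M : ∀ i : Fin k, Matrix (Fin (d (i.1 + 1))) (Fin (d i.1)) ℝ)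
    (hloc : IsLocalMin (fun N => f (chainProd d (ext d k N) 0 k)) M)
    (hgrad : f' (chainProd d (ext d k M) 0 k) ≠ 0) :
    (chainProd d (ext d k M) j k).rank = d j ∧
      (chainProd d (ext d k M) 0 j).rank = d j :=
  stmt_10_general d k f hdiff f' hf' j hjk hmin M hloc hgrad
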